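/- arXiv:2107.02325 — 5 statements merged into one kernel-verified Lean document; each statement's English description precedes it below -/
import Mathlib

section
/- Let a, b, c be linear forms over ℂ, say a = a₁x₁+a₂x₂+a₃x₃, b = b₁x₁+b₂x₂+b₃x₃, c = c₁x₁+c₂x₂+c₃x₃, and let f = a·b·c. Then det(∂ᵢ∂ⱼ f) = 2·[abc]²·a·b·c, where [abc] is the determinant of the 3×3 matrix whose rows are (a₁,a₂,a₃), (b₁,b₂,b₃), (c₁,c₂,c₃). In particular, the Hessian determinant of a completely reducible cubic form is a scalar multiple of the form. -/
/-!
Write `M` for the coefficient matrix with rows `a, b, c`. Differentiating `a b c` twice gives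
the Hessian matrix `Mᵀ Q M` with `Q = [[0, c, b], [c, 0, a], [b, a, 0]]`, the Hessian of `x y z`
evaluated at `(a, b, c)`; since `det Q = 2 a b c`, the Hessian determinant is `2 [abc]² a b c`.
Any linear form is `lin v` for some `v` (Euler's identity: `a = ∑ xᵢ ∂ᵢa` with constant `∂ᵢa`),
so the formula covers every completely reducible cubic.
-/

open MvPolynomial

/-- The Hessian determinant `det (∂ᵢ∂ⱼ f)` of a ternary form. -/
noncomputable def hessianDet (f : MvPolynomial (Fin 3) ℂ) : MvPolynomial (Fin 3) ℂ :=
  Matrix.det (Matrix.of fun i j : Fin 3 => pderiv i (pderiv j f))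

/-- The linear form `v₁x₁ + v₂x₂ + v₃x₃` with coefficient vector `v`. -/
noncomputable def lin (v : Fin 3 → ℂ) : MvPolynomial (Fin 3) ℂ :=
  ∑ i, C (v i) * X i

/-- A linear form is a homogeneous polynomial of degree 1. -/
def IsLinearForm (a : MvPolynomial (Fin 3) ℂ) : Prop := a.IsHomogeneous 1

/-- A cubic form is completely reducible if it is a product of three linear forms. -/
def CompletelyReducible (f : MvPolynomial (Fin 3) ℂ) : Prop :=
  ∃ a b c : MvPolynomial (Fin 3) ℂ,
    IsLinearForm a ∧ IsLinearForm b ∧ IsLinearForm c ∧ f = a * b * c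

open Matrix

lemma pderiv_lin (v : Fin 3 → ℂ) (j : Fin 3) : pderiv j (lin v) = C (v j) := by
  simp [lin, pderiv_X, Pi.single_apply, apply_ite]

lemma IsLinearForm.exists_eq_lin {a : MvPolynomial (Fin 3) ℂ} (h : IsLinearForm a) :
    ∃ v, a = lin v := by
  refine ⟨fun i => coeff 0 (pderiv i a), ?_⟩
  have hconst (i : Fin 3) : pderiv i a = C (coeff 0 (pderiv i a)) :=
    totalDegree_eq_zero_iff_eq_C.mp ((totalDegree_zero_iff_isHomogeneous _).mpr h.pderiv)
  calc a = ∑ i, X i * pderiv i a := by rw [h.sum_X_mul_pderiv, one_smul]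
    _ = lin _ := Finset.sum_congr rfl fun i _ =>
      (mul_comm _ _).trans (congrArg (· * X i) (hconst i))

lemma hessian_lin_mul_lin_mul_lin (a b c : Fin 3 → ℂ) :
    (of fun i j : Fin 3 => pderiv i (pderiv j (lin a * lin b * lin c))) =
      ((of ![a, b, c]).map C)ᵀ * !![0, lin c, lin b; lin c, 0, lin a; lin b, lin a, 0] *
        (of ![a, b, c]).map C := by
  ext i j : 1
  simp [pderiv_lin, mul_apply, Fin.sum_univ_three]
  ring

lemma hessianDet_lin_mul_lin_mul_lin (a b c : Fin 3 → ℂ) :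
    hessianDet (lin a * lin b * lin c) =
      C (2 * (of ![a, b, c]).det ^ 2) * (lin a * lin b * lin c) := by
  have hdetM : ((of ![a, b, c]).map C).det = (C (of ![a, b, c]).det : MvPolynomial (Fin 3) ℂ) :=
    (C.map_det _).symm
  have hdetQ : !![0, lin c, lin b; lin c, 0, lin a; lin b, lin a, 0].det =
      2 * (lin a * lin b * lin c) := by
    simp [det_fin_three]
    ring
  rw [hessianDet, hessian_lin_mul_lin_mul_lin, det_mul, det_mul, det_transpose, hdetM, hdetQ,
    map_mul, map_pow, map_ofNat]
  ring

theorem stmt2 (a b c : Fin 3 → ℂ) :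
    hessianDet (lin a * lin b * lin c) =
        C (2 * (Matrix.det (Matrix.of ![a, b, c])) ^ 2) * (lin a * lin b * lin c) ∧
      ∀ f : MvPolynomial (Fin 3) ℂ, CompletelyReducible f →
        ∃ t : ℂ, hessianDet f = C t * f := by
  refine ⟨hessianDet_lin_mul_lin_mul_lin a b c, ?_⟩
  rintro f ⟨p, q, r, hp, hq, hr, rfl⟩
  obtain ⟨u, rfl⟩ := hp.exists_eq_lin
  obtain ⟨v, rfl⟩ := hq.exists_eq_lin
  obtain ⟨w, rfl⟩ := hr.exists_eq_lin
  exact ⟨_, hessianDet_lin_mul_lin_mul_lin u v w⟩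
end

section
/- Let a, b be linearly independent linear forms over ℂ and let f be a ternary cubic form. Then the Jacobian J[f, a, b] — the determinant of the 3×3 matrix whose rows are (∂₁f, ∂₂f, ∂₃f), (∂₁a, ∂₂a, ∂₃a), (∂₁b, ∂₂b, ∂₃b) — is the zero polynomial if and only if f = g₀·a³ + h₀·a²·b + k₀·a·b² + i₀·b³ for some g₀, h₀, k₀, i₀ ∈ ℂ. -/
open MvPolynomial

/-- The Jacobian of three ternary forms: the determinant of the 3×3 matrix whose rows
are the gradients of the three forms. -/
noncomputable def jacobian (f g h : MvPolynomial (Fin 3) ℂ) : MvPolynomial (Fin 3) ℂ :=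
  Matrix.det !![pderiv 0 f, pderiv 1 f, pderiv 2 f;
                pderiv 0 g, pderiv 1 g, pderiv 2 g;
                pderiv 0 h, pderiv 1 h, pderiv 2 h]

/-!
Complete `a, b` to a basis of linear forms, i.e. pick an invertible `M` whose linear substitution
`x ↦ M x` sends `x₀, x₁` to `a, b`, and write `f` as the substitution of a cubic `F`. By the chain
rule the Jacobian matrix gets multiplied by `M`, so `J[f, a, b]` is the substitution of
`J[F, x₀, x₁] = ∂₂F` times `det M`. Hence `J[f, a, b] = 0` iff `∂₂F = 0`, which in characteristic
zero means that `x₂` does not occur in `F`, i.e. that `F` is a binary cubic in `x₀, x₁`;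
substituting back, `f` is a cubic in `a, b`.
-/

namespace MvPolynomial

section LinSubst

variable {σ R : Type*} [Fintype σ] [CommSemiring R]

noncomputable def linSubst (M : Matrix σ σ R) : MvPolynomial σ R →ₐ[R] MvPolynomial σ R :=
  aeval fun i => ∑ j, M i j • X j

@[simp]
lemma linSubst_X (M : Matrix σ σ R) (i : σ) : linSubst M (X i) = ∑ j, M i j • X j :=
  aeval_X _ _

lemma linSubst_linSubst (M N : Matrix σ σ R) (p : MvPolynomial σ R) :
    linSubst M (linSubst N p) = linSubst (N * M) p := by
  rw [← AlgHom.comp_apply]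
  congr 1
  refine algHom_ext fun i => ?_
  simp only [AlgHom.comp_apply, linSubst_X, map_sum, map_smul, Matrix.mul_apply, Finset.smul_sum,
    smul_smul, Finset.sum_smul]
  exact Finset.sum_comm

lemma linSubst_one [DecidableEq σ] (p : MvPolynomial σ R) : linSubst 1 p = p := by
  rw [← AlgHom.id_apply (R := R) p]
  congr 1
  refine algHom_ext fun i => ?_
  simp [Matrix.one_apply, ite_smul]

lemma pderiv_linSubst_X [DecidableEq σ] (M : Matrix σ σ R) (i j : σ) :
    pderiv j (linSubst M (X i)) = M i j • 1 := by
  simp [pderiv_X, Pi.single_apply]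

lemma pderiv_linSubst (M : Matrix σ σ R) (p : MvPolynomial σ R) (j : σ) :
    pderiv j (linSubst M p) = ∑ i, M i j • linSubst M (pderiv i p) := by
  classical
  induction p using MvPolynomial.induction_on with
  | C c => simp [linSubst]
  | add p q hp hq => simp only [map_add, hp, hq, smul_add, Finset.sum_add_distrib]
  | mul_X p k hp =>
    simp only [map_mul, pderiv_mul, hp, pderiv_linSubst_X, pderiv_X, map_add, smul_add,
      Finset.sum_add_distrib, Finset.sum_mul, smul_mul_assoc]
    simp [Pi.single_apply, apply_ite (linSubst M), mul_comm (linSubst M p)]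

lemma IsHomogeneous.linSubst {p : MvPolynomial σ R} {n : ℕ} (hp : p.IsHomogeneous n)
    (M : Matrix σ σ R) : (linSubst M p).IsHomogeneous n := by
  have hX (i : σ) : (∑ j, M i j • X j : MvPolynomial σ R).IsHomogeneous 1 :=
    IsHomogeneous.sum _ _ _ fun j _ => by
      rw [smul_eq_C_mul]
      exact isHomogeneous_C_mul_X _ _
  have := hp.aeval _ hX
  rw [one_mul] at this
  exact this

noncomputable def jacobianMatrix (v : σ → MvPolynomial σ R) : Matrix σ σ (MvPolynomial σ R) :=
  Matrix.of fun r c => pderiv c (v r)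

lemma jacobianMatrix_linSubst_comp (M : Matrix σ σ R) (v : σ → MvPolynomial σ R) :
    jacobianMatrix (linSubst M ∘ v) = (jacobianMatrix v).map (linSubst M) * M.map C := by
  ext r c
  simp [jacobianMatrix, Matrix.mul_apply, pderiv_linSubst, smul_eq_C_mul, mul_comm]

end LinSubst

section CommRing

variable {σ R : Type*} [Fintype σ] [DecidableEq σ] [CommRing R] {M : Matrix σ σ R}

lemma linSubst_inv_linSubst (hM : IsUnit M.det) (p : MvPolynomial σ R) :
    linSubst M⁻¹ (linSubst M p) = p := by
  rw [linSubst_linSubst, Matrix.mul_nonsing_inv _ hM, linSubst_one]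

lemma linSubst_linSubst_inv (hM : IsUnit M.det) (p : MvPolynomial σ R) :
    linSubst M (linSubst M⁻¹ p) = p := by
  rw [linSubst_linSubst, Matrix.nonsing_inv_mul _ hM, linSubst_one]

end CommRing

lemma IsHomogeneous.exists_eq_sum_smul_X {σ R : Type*} [Fintype σ] [CommSemiring R]
    {p : MvPolynomial σ R} (hp : p.IsHomogeneous 1) : ∃ c : σ → R, p = ∑ i, c i • X i := by
  have : p ∈ homogeneousSubmodule σ R 1 := hp
  rw [homogeneousSubmodule_one_eq_span_X, Submodule.mem_span_range_iff_exists_fun] at this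
  obtain ⟨c, hc⟩ := this
  exact ⟨c, hc.symm⟩

lemma exists_linSubst_X_zero_X_one_eq {K : Type*} [Field K] {a b : MvPolynomial (Fin 3) K}
    (ha : a.IsHomogeneous 1) (hb : b.IsHomogeneous 1) (hab : LinearIndependent K ![a, b]) :
    ∃ M : Matrix (Fin 3) (Fin 3) K,
      IsUnit M.det ∧ linSubst M (X 0) = a ∧ linSubst M (X 1) = b := by
  obtain ⟨ca, rfl⟩ := ha.exists_eq_sum_smul_X
  obtain ⟨cb, rfl⟩ := hb.exists_eq_sum_smul_X
  have hc : LinearIndependent K ![ca, cb] := by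
    refine .of_comp (Fintype.linearCombination K (X : Fin 3 → MvPolynomial (Fin 3) K)) ?_
    convert hab using 1
    ext i; fin_cases i <;> rfl
  obtain ⟨v, hv⟩ := exists_linearIndependent_snoc_of_lt_finrank hc (by simp)
  refine ⟨Matrix.of (Fin.snoc ![ca, cb] v), ?_, ?_, ?_⟩
  · exact (Matrix.isUnit_iff_isUnit_det _).mp (Matrix.linearIndependent_rows_iff_isUnit.mp hv)
  · simp
  · simp

lemma coeff_C_mul_X_pow_mul_X_pow {σ R : Type*} [CommSemiring R] [DecidableEq σ] (c : R)
    (i j : σ) (k l : ℕ) (d : σ →₀ ℕ) :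
    coeff d (C c * X i ^ k * X j ^ l) =
      if Finsupp.single i k + Finsupp.single j l = d then c else 0 := by
  rw [X_pow_eq_monomial, X_pow_eq_monomial, C_mul_monomial, monomial_mul, mul_one, mul_one,
    coeff_monomial]

lemma IsHomogeneous.exists_eq_sum_X_pow_mul_X_pow {σ R : Type*} [CommSemiring R] [DecidableEq σ]
    {p : MvPolynomial σ R} {n : ℕ} (hp : p.IsHomogeneous n) {i j : σ} (hij : i ≠ j)
    (hvars : p.vars ⊆ {i, j}) :
    ∃ c : ℕ → R, p = ∑ k ∈ Finset.range (n + 1), C (c k) * X i ^ k * X j ^ (n - k) := by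
  refine ⟨fun k => coeff (Finsupp.single i k + Finsupp.single j (n - k)) p, ?_⟩
  ext d
  simp only [coeff_sum, coeff_C_mul_X_pow_mul_X_pow]
  by_cases hd : coeff d p = 0
  · rw [hd, eq_comm]
    refine Finset.sum_eq_zero fun k _ => ?_
    split_ifs with h
    exacts [h ▸ hd, rfl]
  have hsupp : d.support ⊆ {i, j} := fun l hl =>
    hvars ((mem_vars_iff_mem_support l).mpr ⟨d, mem_support_iff.mpr hd, hl⟩)
  have hdeg : d i + d j = n := by
    rw [← hp hd, Finsupp.weight_apply, Finsupp.sum_of_support_subset d hsupp _ (by simp),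
      Finset.sum_pair hij]
    simp
  have hd_eq : Finsupp.single i (d i) + Finsupp.single j (n - d i) = d := by
    ext l
    by_cases hli : l = i
    · subst hli; simp [hij.symm]
    by_cases hlj : l = j
    · subst hlj; simp [hij, ← hdeg]
    · have : l ∉ d.support := fun h => by simpa [hli, hlj] using hsupp h
      simp_all
  rw [Finset.sum_eq_single (d i)]
  · rw [if_pos hd_eq, hd_eq]
  · intro k _ hk
    rw [if_neg]
    rintro rfl
    exact hk (by simp [hij])
  · intro h
    exact absurd (Finset.mem_range.mpr (by omega)) h

section CharZero

variable {σ R : Type*} [CommSemiring R] [NoZeroDivisors R] [CharZero R]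

lemma pderiv_eq_zero_iff_notMem_vars {p : MvPolynomial σ R} {i : σ} :
    pderiv i p = 0 ↔ i ∉ p.vars := by
  classical
  refine ⟨fun h hi => ?_, pderiv_eq_zero_of_notMem_vars⟩
  obtain ⟨d, hd, hid⟩ := (mem_vars_iff_mem_support i).mp hi
  have hle : Finsupp.single i 1 ≤ d :=
    Finsupp.single_le_iff.mpr (Nat.one_le_iff_ne_zero.mpr (Finsupp.mem_support_iff.mp hid))
  have := coeff_pderiv (i := i) p (d - Finsupp.single i 1)
  rw [h, coeff_zero, tsub_add_cancel_of_le hle, eq_comm, mul_eq_zero] at this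
  exact this.elim (mem_support_iff.mp hd) (Nat.cast_add_one_ne_zero _)

lemma IsHomogeneous.pderiv_two_eq_zero_iff {F : MvPolynomial (Fin 3) R} (hF : F.IsHomogeneous 3) :
    pderiv 2 F = 0 ↔ ∃ g₀ h₀ k₀ i₀ : R,
      F = C g₀ * X 0 ^ 3 + C h₀ * X 0 ^ 2 * X 1 + C k₀ * X 0 * X 1 ^ 2 + C i₀ * X 1 ^ 3 := by
  constructor
  · intro h2
    have hvars : F.vars ⊆ {0, 1} := fun l hl => by
      fin_cases l <;> simp_all [pderiv_eq_zero_iff_notMem_vars]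
    obtain ⟨c, hc⟩ := hF.exists_eq_sum_X_pow_mul_X_pow (by decide) hvars
    exact ⟨c 3, c 2, c 1, c 0, by rw [hc]; simp [Finset.sum_range_succ]; ring⟩
  · rintro ⟨g₀, h₀, k₀, i₀, rfl⟩
    simp [pderiv_X]

end CharZero

end MvPolynomial

open MvPolynomial

lemma jacobian_eq_det_jacobianMatrix (f g h : MvPolynomial (Fin 3) ℂ) :
    jacobian f g h = (jacobianMatrix ![f, g, h]).det := by
  rw [jacobian]
  congr 1
  ext r c
  fin_cases r <;> fin_cases c <;> rfl

lemma jacobian_linSubst (M : Matrix (Fin 3) (Fin 3) ℂ) (f g h : MvPolynomial (Fin 3) ℂ) :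
    jacobian (linSubst M f) (linSubst M g) (linSubst M h) =
      linSubst M (jacobian f g h) * C M.det := by
  have hv : ![linSubst M f, linSubst M g, linSubst M h] = linSubst M ∘ ![f, g, h] := by
    ext i; fin_cases i <;> rfl
  rw [jacobian_eq_det_jacobianMatrix, jacobian_eq_det_jacobianMatrix, hv,
    jacobianMatrix_linSubst_comp, Matrix.det_mul, AlgHom.map_det, RingHom.map_det]
  rfl

lemma jacobian_X_zero_X_one (F : MvPolynomial (Fin 3) ℂ) :
    jacobian F (X 0) (X 1) = pderiv 2 F := by
  simp [jacobian, Matrix.det_fin_three, pderiv_X]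

theorem stmt14 (a b f : MvPolynomial (Fin 3) ℂ)
    (ha : IsLinearForm a) (hb : IsLinearForm b)
    (hab : LinearIndependent ℂ ![a, b]) (hf : f.IsHomogeneous 3) :
    jacobian f a b = 0 ↔
      ∃ g₀ h₀ k₀ i₀ : ℂ,
        f = C g₀ * a ^ 3 + C h₀ * a ^ 2 * b + C k₀ * a * b ^ 2 + C i₀ * b ^ 3 := by
  obtain ⟨M, hM, rfl, rfl⟩ := exists_linSubst_X_zero_X_one_eq ha hb hab
  obtain ⟨F, rfl⟩ : ∃ F, linSubst M F = f := ⟨_, linSubst_linSubst_inv hM f⟩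
  have hF : F.IsHomogeneous 3 := by simpa [linSubst_inv_linSubst hM] using hf.linSubst M⁻¹
  have hinj : Function.Injective (linSubst M) :=
    Function.LeftInverse.injective (linSubst_inv_linSubst hM)
  rw [jacobian_linSubst, jacobian_X_zero_X_one, mul_eq_zero, C_eq_zero, or_iff_left hM.ne_zero,
    map_eq_zero_iff _ hinj, hF.pderiv_two_eq_zero_iff]
  refine exists₄_congr fun g₀ h₀ k₀ i₀ => ?_
  rw [← hinj.eq_iff]
  simp
end

section
/- Let a be a nonzero linear form over ℂ and let f be a ternary quadratic form. Then the determinant of the 3×3 matrix with rows (∂₁f, ∂₂f, ∂₃f), (∂₁a, ∂₂a, ∂₃a), (u₁, u₂, u₃) is the zero polynomial for every (u₁,u₂,u₃) ∈ ℂ³ (i.e. the Jacobian of f, a and every linear form vanishes identically) if and only if a² divides f, i.e. f = t·a² for some t ∈ ℂ. -/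
/-!
The Jacobians `J[f, a, u]` for the three coordinate vectors `u` are the `2 × 2` minors of the
gradients of `f` and `a`, so the hypothesis says that `∇f` and `∇a` are parallel. The gradient of
the linear form `a` is a constant vector, with some entry `c = ∂ᵢa ≠ 0`, and Euler's identity
turns parallelism into `2 c f = a ∂ᵢf`. Differentiating along `xᵢ` gives `c ∂ᵢf = a ∂ᵢ²f`, where
`∂ᵢ²f` is a constant `s`, hence `2 c² f = s a²`.
-/

open MvPolynomial

namespace MvPolynomial

section CommSemiring

variable {R σ : Type*} [CommSemiring R] {φ ψ : MvPolynomial σ R}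

lemma IsHomogeneous.exists_pderiv_eq_C (h : φ.IsHomogeneous 1) (i : σ) :
    ∃ c, pderiv i φ = C c :=
  ⟨_, totalDegree_eq_zero_iff_eq_C.mp ((totalDegree_zero_iff_isHomogeneous σ).mpr h.pderiv)⟩

variable [Fintype σ]

lemma IsHomogeneous.exists_pderiv_ne_zero (h : φ.IsHomogeneous 1) (h0 : φ ≠ 0) :
    ∃ i, pderiv i φ ≠ 0 := by
  by_contra! hi
  apply h0
  simpa [hi] using h.sum_X_mul_pderiv.symm

lemma nsmul_mul_pderiv_eq_of_pderiv_mul_comm {m n : ℕ} (hφ : φ.IsHomogeneous m)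
    (hψ : ψ.IsHomogeneous n) (h : ∀ i j, pderiv i φ * pderiv j ψ = pderiv j φ * pderiv i ψ)
    (i : σ) : m • φ * pderiv i ψ = n • ψ * pderiv i φ := by
  rw [← hφ.sum_X_mul_pderiv, ← hψ.sum_X_mul_pderiv, Finset.sum_mul, Finset.sum_mul]
  refine Finset.sum_congr rfl fun j _ => ?_
  rw [mul_assoc, mul_assoc, h, mul_comm (pderiv j ψ)]

end CommSemiring

theorem pderiv_mul_comm_iff_exists_eq_C_mul_sq {K σ : Type*} [Field K] [NeZero (2 : K)]
    [Fintype σ] {a f : MvPolynomial σ K} (ha : a.IsHomogeneous 1) (ha0 : a ≠ 0)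
    (hf : f.IsHomogeneous 2) :
    (∀ i j, pderiv i f * pderiv j a = pderiv j f * pderiv i a) ↔ ∃ t, f = C t * a ^ 2 := by
  refine ⟨fun h => ?_, ?_⟩
  · obtain ⟨i, hi⟩ := ha.exists_pderiv_ne_zero ha0
    obtain ⟨c, hc⟩ := ha.exists_pderiv_eq_C i
    obtain ⟨s, hs⟩ := (hf.pderiv (i := i)).exists_pderiv_eq_C i
    have hc0 : c ≠ 0 := by rintro rfl; exact hi (by simpa using hc)
    have hfa : 2 • (C c * f) = a * pderiv i f := by
      have := nsmul_mul_pderiv_eq_of_pderiv_mul_comm hf ha h i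
      rw [hc, one_smul] at this
      linear_combination this
    have hdiff : C c * pderiv i f = a * C s := by
      have := congrArg (pderiv i) hfa
      simp only [map_nsmul, Derivation.leibniz, pderiv_C, hc, hs, smul_eq_mul] at this
      linear_combination this
    have hu : C (2 * c ^ 2)⁻¹ * (2 * C c ^ 2) = (1 : MvPolynomial σ K) := by
      rw [← map_ofNat C 2, ← map_pow, ← map_mul, ← map_mul,
        inv_mul_cancel₀ (mul_ne_zero two_ne_zero (pow_ne_zero 2 hc0)), map_one]
    refine ⟨s * (2 * c ^ 2)⁻¹, ?_⟩
    rw [map_mul]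
    linear_combination (-f) * hu + C (2 * c ^ 2)⁻¹ * (C c * hfa + a * hdiff)
  · rintro ⟨t, rfl⟩ i j
    simp only [pderiv_C_mul, pderiv_pow]
    ring

end MvPolynomial

lemma forall_det_fin_three_map_eq_zero_iff {R S : Type*} [CommRing R] [CommRing S] (φ : R →+* S)
    (p q : Fin 3 → S) :
    (∀ u : Fin 3 → R,
        Matrix.det !![p 0, p 1, p 2; q 0, q 1, q 2; φ (u 0), φ (u 1), φ (u 2)] = 0) ↔
      ∀ i j, p i * q j = p j * q i := by
  simp only [Matrix.det_fin_three, Matrix.of_apply, Matrix.cons_val]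
  refine ⟨fun h i j => ?_, fun h u => ?_⟩
  · have h0 := h ![1, 0, 0]
    have h1 := h ![0, 1, 0]
    have h2 := h ![0, 0, 1]
    simp only [Matrix.cons_val, map_one, map_zero, mul_one, mul_zero, sub_zero,
      zero_sub, add_zero, zero_add] at h0 h1 h2
    fin_cases i <;> fin_cases j <;> grind
  · linear_combination φ (u 0) * h 1 2 - φ (u 1) * h 0 2 + φ (u 2) * h 0 1

theorem stmt15 (a f : MvPolynomial (Fin 3) ℂ)
    (ha : IsLinearForm a) (ha0 : a ≠ 0) (hf : f.IsHomogeneous 2) :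
    (∀ u : Fin 3 → ℂ,
        Matrix.det !![pderiv 0 f, pderiv 1 f, pderiv 2 f;
                      pderiv 0 a, pderiv 1 a, pderiv 2 a;
                      C (u 0), C (u 1), C (u 2)] = 0) ↔
      ∃ t : ℂ, f = C t * a ^ 2 :=
  (forall_det_fin_three_map_eq_zero_iff C (fun i => pderiv i f) (fun i => pderiv i a)).trans
    (pderiv_mul_comm_iff_exists_eq_C_mul_sq ha ha0 hf)
end

section
/- Let a be a nonzero linear form over ℂ and let f be a ternary cubic form. Then the determinant of the 3×3 matrix with rows (∂₁f, ∂₂f, ∂₃f), (∂₁a, ∂₂a, ∂₃a), (u₁, u₂, u₃) is the zero polynomial for every (u₁,u₂,u₃) ∈ ℂ³ (i.e. the Jacobian of f, a and every linear form vanishes identically) if and only if a³ divides f, i.e. f = t·a³ for some t ∈ ℂ. -/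
/-!
Write `∇g` for the gradient. The determinant vanishes for every `u` exactly when `∇f × ∇a = 0`,
i.e. `∂ᵢf ∂ⱼa = ∂ⱼf ∂ᵢa` for all `i, j`. The partials of `a` are constants, one of them
`∂ₖa = c ≠ 0`, and Euler's identity for `f` and for `a` turns these relations into
`3 c f = a ∂ₖf`. Differentiating along `xₖ` reproduces this relation one degree lower, so
induction on the degree gives `f = t a³`. Conversely `∇(t a³) = 3 t a² ∇a` is parallel to `∇a`.
-/

open MvPolynomial

open Matrix

namespace MvPolynomial

section CommSemiring

variable {σ R : Type*} [CommSemiring R] {p q : MvPolynomial σ R}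

theorem IsHomogeneous.eq_C_coeff_zero (hp : p.IsHomogeneous 0) : p = C (coeff 0 p) :=
  totalDegree_eq_zero_iff_eq_C.mp ((totalDegree_zero_iff_isHomogeneous σ).mpr hp)

variable [Fintype σ]

theorem IsHomogeneous.exists_pderiv_eq_C_ne_zero (hp : p.IsHomogeneous 1) (hp0 : p ≠ 0) :
    ∃ k c, c ≠ 0 ∧ pderiv k p = C c := by
  have euler : ∑ i : σ, X i * pderiv i p ≠ 0 := by
    rwa [hp.sum_X_mul_pderiv, one_smul]
  obtain ⟨k, -, hk⟩ := Finset.exists_ne_zero_of_sum_ne_zero euler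
  have hconst : pderiv k p = C (coeff 0 (pderiv k p)) := hp.pderiv.eq_C_coeff_zero
  refine ⟨k, _, fun h0 => ?_, hconst⟩
  rw [hconst, h0, C_0, mul_zero] at hk
  exact hk rfl

theorem IsHomogeneous.nsmul_pderiv_mul_eq_mul_pderiv {n : ℕ} (hp : p.IsHomogeneous n)
    (hq : q.IsHomogeneous 1) (h : ∀ i j, pderiv i p * pderiv j q = pderiv j p * pderiv i q)
    (k : σ) : n • (pderiv k q * p) = q * pderiv k p := by
  calc n • (pderiv k q * p) = ∑ i, X i * (pderiv i p * pderiv k q) := by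
        rw [← mul_smul_comm, ← hp.sum_X_mul_pderiv, Finset.mul_sum]
        exact Finset.sum_congr rfl fun i _ => by ring
    _ = (∑ i, X i * pderiv i q) * pderiv k p := by
        simp_rw [h _ k, Finset.sum_mul]
        exact Finset.sum_congr rfl fun i _ => by ring
    _ = q * pderiv k p := by rw [hq.sum_X_mul_pderiv, one_smul]

end CommSemiring

theorem IsHomogeneous.exists_eq_C_mul_pow {σ K : Type*} [Field K] [CharZero K]
    {a p : MvPolynomial σ K} {k : σ} {c : K} {n : ℕ} (hp : p.IsHomogeneous n) (hc : c ≠ 0)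
    (hak : pderiv k a = C c) (h : n • (C c * p) = a * pderiv k p) : ∃ t, p = C t * a ^ n := by
  induction n generalizing p with
  | zero => exact ⟨coeff 0 p, by rw [pow_zero, mul_one]; exact hp.eq_C_coeff_zero⟩
  | succ n ih =>
    have hdiff : n • (C c * pderiv k p) = a * pderiv k (pderiv k p) := by
      have := congrArg (pderiv k) h
      rw [map_nsmul, pderiv_C_mul, pderiv_mul, hak, succ_nsmul] at this
      linear_combination this
    obtain ⟨s, hs⟩ := ih hp.pderiv hdiff
    have hnc : ((n + 1 : ℕ) : K) * c ≠ 0 := mul_ne_zero (Nat.cast_ne_zero.mpr n.succ_ne_zero) hc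
    refine ⟨s / ((n + 1 : ℕ) * c), mul_left_cancel₀ (C_ne_zero.mpr hnc) ?_⟩
    rw [← mul_assoc, ← map_mul, mul_div_cancel₀ _ hnc, map_mul, map_natCast, mul_assoc,
      ← nsmul_eq_mul, h, hs]
    ring

end MvPolynomial

theorem mul_eq_mul_of_cross_eq_zero {A : Type*} [CommRing A] {x y : Fin 3 → A} (h : x ⨯₃ y = 0)
    (i j : Fin 3) : x i * y j = x j * y i := by
  have h0 := congrFun h 0
  have h1 := congrFun h 1
  have h2 := congrFun h 2
  simp only [cross_apply, cons_val, Pi.zero_apply] at h0 h1 h2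
  fin_cases i <;> fin_cases j <;> grind

theorem forall_det_eq_zero_iff_cross_eq_zero {σ R : Type*} [CommRing R]
    (x y : Fin 3 → MvPolynomial σ R) :
    (∀ u : Fin 3 → R, Matrix.det !![x 0, x 1, x 2; y 0, y 1, y 2; C (u 0), C (u 1), C (u 2)] = 0)
      ↔ x ⨯₃ y = 0 := by
  have hdet : ∀ u : Fin 3 → R,
      Matrix.det !![x 0, x 1, x 2; y 0, y 1, y 2; C (u 0), C (u 1), C (u 2)] =
        (fun i => C (u i)) ⬝ᵥ x ⨯₃ y := by
    intro u
    rw [Matrix.det_fin_three]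
    simp only [of_apply, cons_val', cons_val_zero, cons_val_one, cons_val, cons_val_fin_one,
      dotProduct, cross_apply, Fin.sum_univ_three]
    ring
  simp only [hdet]
  constructor
  · intro h
    funext i
    simpa [dotProduct, Pi.single_apply] using h (Pi.single i 1)
  · intro h u
    rw [h, dotProduct_zero]

theorem stmt16 (a f : MvPolynomial (Fin 3) ℂ)
    (ha : IsLinearForm a) (ha0 : a ≠ 0) (hf : f.IsHomogeneous 3) :
    (∀ u : Fin 3 → ℂ,
        Matrix.det !![pderiv 0 f, pderiv 1 f, pderiv 2 f;
                      pderiv 0 a, pderiv 1 a, pderiv 2 a;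
                      C (u 0), C (u 1), C (u 2)] = 0) ↔
      ∃ t : ℂ, f = C t * a ^ 3 := by
  rw [forall_det_eq_zero_iff_cross_eq_zero (fun i => pderiv i f) (fun i => pderiv i a)]
  constructor
  · intro h
    obtain ⟨k, c, hc, hak⟩ := IsHomogeneous.exists_pderiv_eq_C_ne_zero ha ha0
    have hrel := hf.nsmul_pderiv_mul_eq_mul_pderiv ha (mul_eq_mul_of_cross_eq_zero h) k
    rw [hak] at hrel
    exact hf.exists_eq_C_mul_pow hc hak hrel
  · rintro ⟨t, rfl⟩
    have hgrad : (fun i => pderiv i (C t * a ^ 3)) = (C t * 3 * a ^ 2) • fun i => pderiv i a := by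
      funext i
      simp only [pderiv_C_mul, pderiv_pow, Pi.smul_apply, smul_eq_mul]
      ring
    rw [hgrad, LinearMap.map_smul₂, cross_self, smul_zero]
end

section
/- Let a, b, c, d ∈ ℂ and let f be the ternary cubic form f = a·(2x₁−x₂−x₃)(2x₂−x₃−x₁)(2x₃−x₁−x₂) + b·(x₁−x₂)(x₂−x₃)(x₃−x₁) + c·(x₁+x₂+x₃)³ + d·(x₁³+x₂³+x₃³−3x₁x₂x₃). Then f is completely reducible if and only if either a = b = c = 0, or (27a² + b²)·c + d³ = 0. -/
/-!
Let `ω` be a primitive cube root of unity. In the coordinates `u = x₁ + x₂ + x₃`,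
`v = x₁ + ω x₂ + ω² x₃`, `w = x₁ + ω² x₂ + ω x₃` the cubic becomes the Hesse form
`A v³ + B w³ + c u³ + d uvw` with `A, B = a ± (ω - ω²) b / 9`, so that `27 A B = 27 a² + b²`.

If `27 A B c + d³ = 0`, pick cube roots `α³ = A`, `β³ = B`, `γ³ = c` with `3 α β γ = -d`; then
`X³ + Y³ + Z³ - 3XYZ = (X + Y + Z)(X + ωY + ω²Z)(X + ω²Y + ωZ)` at `(αv, βw, γu)` factors the form.
Conversely, the Hessian of a product of three linear forms is a constant multiple of it, whereas
the Hessian of `A v³ + B w³ + c u³ + d uvw` is a nonzero constant times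
`(216 A B c + 2 d³) uvw - 6 d² (A v³ + B w³ + c u³)`. Comparing the two at the points where
`(v, w, u)` equals `(1, 0, 0)`, `(0, 1, 0)`, `(0, 0, 1)` and `(1, 1, 1)` gives
`A = B = c = 0` or `27 A B c + d³ = 0`.
-/

open MvPolynomial

namespace MvPolynomial

variable {R σ : Type*} [CommRing R]

noncomputable def linearForm [Fintype σ] (p : σ → R) : MvPolynomial σ R :=
  ∑ i, C (p i) * X i

noncomputable def hessian [Fintype σ] [DecidableEq σ] (F : MvPolynomial σ R) :
    MvPolynomial σ R :=
  (Matrix.of fun i j => pderiv i (pderiv j F)).det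

noncomputable def hesseForm (a b c d : R) (x y z : MvPolynomial σ R) : MvPolynomial σ R :=
  C a * x ^ 3 + C b * y ^ 3 + C c * z ^ 3 + C d * (x * y * z)

section LinearForm

variable [Fintype σ]

theorem pderiv_linearForm [DecidableEq σ] (p : σ → R) (i : σ) :
    pderiv i (linearForm p) = C (p i) := by
  simp [linearForm, pderiv_X, Pi.single_apply]

theorem eval_linearForm (p x : σ → R) : eval x (linearForm p) = p ⬝ᵥ x := by
  simp [linearForm, dotProduct]

theorem isHomogeneous_linearForm (p : σ → R) : (linearForm p).IsHomogeneous 1 :=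
  IsHomogeneous.sum _ _ _ fun i _ => isHomogeneous_C_mul_X (p i) i

theorem exists_eval_linearForm_eq {n : ℕ} {N : Matrix (Fin n) (Fin n) R} (hN : IsUnit N.det)
    (y : Fin n → R) : ∃ x, ∀ k, eval x (linearForm (N k)) = y k := by
  have hy : N.mulVec (N⁻¹.mulVec y) = y := by
    rw [Matrix.mulVec_mulVec, Matrix.mul_nonsing_inv _ hN, Matrix.one_mulVec]
  exact ⟨N⁻¹.mulVec y, fun k => (eval_linearForm _ _).trans (congrFun hy k)⟩

end LinearForm

theorem IsHomogeneous.pderiv_eq_C [DecidableEq σ] {F : MvPolynomial σ R}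
    (hF : F.IsHomogeneous 1) (i : σ) : pderiv i F = C (coeff 0 (pderiv i F)) :=
  totalDegree_eq_zero_iff_eq_C.mp ((totalDegree_zero_iff_isHomogeneous σ).mpr hF.pderiv)

theorem hessian_hesseForm {a b c d : R} {x y z : MvPolynomial (Fin 3) R}
    (N : Matrix (Fin 3) (Fin 3) R) (hx : ∀ i, pderiv i x = C (N 0 i))
    (hy : ∀ i, pderiv i y = C (N 1 i)) (hz : ∀ i, pderiv i z = C (N 2 i)) :
    hessian (hesseForm a b c d x y z) = C (N.det ^ 2) *
      (C (216 * a * b * c + 2 * d ^ 3) * (x * y * z) - C (6 * d ^ 2) * hesseForm a b c 0 x y z) := by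
  -- chain rule: the Hessian matrix is `Nᵀ G N`, with `G` the Hessian of the Hesse cubic at `(x, y, z)`
  let G : Matrix (Fin 3) (Fin 3) (MvPolynomial (Fin 3) R) :=
    !![6 * C a * x, C d * z, C d * y; C d * z, 6 * C b * y, C d * x; C d * y, C d * x, 6 * C c * z]
  have hmat : (Matrix.of fun i j => pderiv i (pderiv j (hesseForm a b c d x y z))) =
      (N.map C).transpose * G * N.map C := by
    refine Matrix.ext fun i j => ?_
    simp only [G, hesseForm, pow_succ, pow_zero, one_mul, map_add, Derivation.leibniz, hx, hy, hz,
      smul_eq_mul, derivation_C, mul_zero, add_zero, zero_add, Matrix.of_apply, Matrix.mul_apply,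
      Matrix.transpose_apply, Matrix.map_apply, Fin.sum_univ_three, Matrix.cons_val',
      Matrix.cons_val_fin_one, Matrix.cons_val_zero, Matrix.cons_val_one, Matrix.cons_val]
    ring
  have hN : (N.map (C : R →+* MvPolynomial (Fin 3) R)).det = C N.det := (RingHom.map_det C N).symm
  have hG : G.det =
      C (216 * a * b * c + 2 * d ^ 3) * (x * y * z) - C (6 * d ^ 2) * hesseForm a b c 0 x y z := by
    simp only [G, Matrix.det_fin_three, Matrix.of_apply, Matrix.cons_val', Matrix.cons_val_zero,
      Matrix.cons_val_fin_one, Matrix.cons_val_one, Matrix.cons_val, hesseForm, C_add, C_mul, C_pow,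
      C_0, map_ofNat C, zero_mul, add_zero]
    ring
  rw [hessian, hmat, Matrix.det_mul, Matrix.det_mul, Matrix.det_transpose, hN, hG, map_pow]
  ring

theorem hessian_mul_mul {x y z : MvPolynomial (Fin 3) R} (N : Matrix (Fin 3) (Fin 3) R)
    (hx : ∀ i, pderiv i x = C (N 0 i)) (hy : ∀ i, pderiv i y = C (N 1 i))
    (hz : ∀ i, pderiv i z = C (N 2 i)) :
    hessian (x * y * z) = C (2 * N.det ^ 2) * (x * y * z) := by
  have h := hessian_hesseForm (a := 0) (b := 0) (c := 0) (d := 1) N hx hy hz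
  simp only [hesseForm, map_zero, zero_mul, zero_add, map_one, one_mul] at h
  rw [h]
  simp only [C_pow, C_mul, map_ofNat C, mul_zero, one_pow, mul_one, zero_add, sub_zero]
  ring

end MvPolynomial

theorem sum_cubes_sub_three_mul_eq_mul {S : Type*} [CommRing S] {ω : S}
    (hω : ω ^ 2 + ω + 1 = 0) (x y z : S) :
    x ^ 3 + y ^ 3 + z ^ 3 - 3 * x * y * z =
      (x + y + z) * (x + ω * y + ω ^ 2 * z) * (x + ω ^ 2 * y + ω * z) := by
  grind

theorem exists_sq_add_self_add_one_eq_zero (K : Type*) [Field K] [IsAlgClosed K] :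
    ∃ ω : K, ω ^ 2 + ω + 1 = 0 := by
  have hdeg : (Polynomial.X ^ 2 + Polynomial.X + 1 : Polynomial K).degree = 2 := by
    compute_degree!
  obtain ⟨ω, hω⟩ := IsAlgClosed.exists_root _ (by rw [hdeg]; decide)
  exact ⟨ω, by simpa using hω⟩

section HesseForm

variable {K : Type*} [Field K] {a b c d : K}

theorem exists_cube_roots_of_hesse [IsAlgClosed K] (h3 : (3 : K) ≠ 0)
    (h : 27 * a * b * c + d ^ 3 = 0) :
    ∃ α β γ : K, α ^ 3 = a ∧ β ^ 3 = b ∧ γ ^ 3 = c ∧ 3 * α * β * γ = -d := by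
  obtain ⟨α, rfl⟩ := IsAlgClosed.exists_pow_nat_eq a three_pos
  obtain ⟨β, rfl⟩ := IsAlgClosed.exists_pow_nat_eq b three_pos
  by_cases hαβ : α * β = 0
  · obtain ⟨γ, rfl⟩ := IsAlgClosed.exists_pow_nat_eq c three_pos
    have hd : d = 0 := pow_eq_zero_iff three_ne_zero |>.mp
      (by linear_combination h - 27 * γ ^ 3 * (α * β) ^ 2 * hαβ)
    exact ⟨α, β, γ, rfl, rfl, rfl, by linear_combination 3 * γ * hαβ + hd⟩
  · refine ⟨α, β, -d / (3 * (α * β)), rfl, rfl, ?_, ?_⟩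
    · rw [div_pow, div_eq_iff (pow_ne_zero 3 (mul_ne_zero h3 hαβ))]
      linear_combination -h
    · linear_combination mul_div_cancel₀ (-d) (mul_ne_zero h3 hαβ)

theorem hesse_coeffs_of_hessian_proportional {δ κ : K} (hδ : δ ≠ 0) (h2 : (2 : K) ≠ 0)
    (h : ∀ y : Fin 3 → K, δ * ((216 * a * b * c + 2 * d ^ 3) * (y 0 * y 1 * y 2) -
      6 * d ^ 2 * (a * y 0 ^ 3 + b * y 1 ^ 3 + c * y 2 ^ 3)) =
      κ * (a * y 0 ^ 3 + b * y 1 ^ 3 + c * y 2 ^ 3 + d * (y 0 * y 1 * y 2))) :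
    (a = 0 ∧ b = 0 ∧ c = 0) ∨ 27 * a * b * c + d ^ 3 = 0 := by
  by_cases habc : a = 0 ∧ b = 0 ∧ c = 0
  · exact Or.inl habc
  right
  have hκ : κ = -6 * δ * d ^ 2 := by
    have ha := h ![1, 0, 0]
    have hb := h ![0, 1, 0]
    have hc := h ![0, 0, 1]
    simp only [Matrix.cons_val_zero, Matrix.cons_val_one, Matrix.cons_val, one_pow, mul_one,
      mul_zero, ne_eq, OfNat.ofNat_ne_zero, not_false_eq_true, zero_pow, add_zero, zero_add,
      zero_sub, mul_neg] at ha hb hc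
    obtain ha0 | hb0 | hc0 : a ≠ 0 ∨ b ≠ 0 ∨ c ≠ 0 := by tauto
    · exact mul_right_cancel₀ ha0 (by linear_combination -ha)
    · exact mul_right_cancel₀ hb0 (by linear_combination -hb)
    · exact mul_right_cancel₀ hc0 (by linear_combination -hc)
  have h1 := h 1
  simp only [Pi.one_apply, one_pow, mul_one] at h1
  have h8 : (8 * δ) * (27 * a * b * c + d ^ 3) = 0 := by
    linear_combination h1 + (a + b + c + d) * hκ
  refine (mul_eq_zero.mp h8).resolve_left (mul_ne_zero ?_ hδ)
  rw [show (8 : K) = 2 ^ 3 by norm_num]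
  exact pow_ne_zero 3 h2

end HesseForm

theorem CompletelyReducible.exists_hessian_eq_C_mul {F : MvPolynomial (Fin 3) ℂ}
    (hF : CompletelyReducible F) : ∃ κ : ℂ, hessian F = C κ * F := by
  obtain ⟨x, y, z, hx, hy, hz, rfl⟩ := hF
  exact ⟨_, hessian_mul_mul (Matrix.of ![fun i => coeff 0 (pderiv i x),
    fun i => coeff 0 (pderiv i y), fun i => coeff 0 (pderiv i z)])
    (IsHomogeneous.pderiv_eq_C hx) (IsHomogeneous.pderiv_eq_C hy) (IsHomogeneous.pderiv_eq_C hz)⟩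

theorem completelyReducible_hesseForm {x y z : MvPolynomial (Fin 3) ℂ} (hx : IsLinearForm x)
    (hy : IsLinearForm y) (hz : IsLinearForm z) {a b c d : ℂ}
    (h : (a = 0 ∧ b = 0 ∧ c = 0) ∨ 27 * a * b * c + d ^ 3 = 0) :
    CompletelyReducible (hesseForm a b c d x y z) := by
  rcases h with ⟨rfl, rfl, rfl⟩ | h
  · refine ⟨C d * x, y, z, IsHomogeneous.C_mul hx d, hy, hz, ?_⟩
    simp only [hesseForm, C_0, zero_mul, add_zero, zero_add]
    ring
  obtain ⟨α, β, γ, rfl, rfl, rfl, hd⟩ := exists_cube_roots_of_hesse three_ne_zero h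
  obtain rfl : d = -(3 * α * β * γ) := by linear_combination hd
  obtain ⟨ω, hω⟩ := exists_sq_add_self_add_one_eq_zero ℂ
  have hlin (p q r : ℂ) : IsLinearForm (C p * x + C q * y + C r * z) :=
    ((IsHomogeneous.C_mul hx p).add (IsHomogeneous.C_mul hy q)).add (IsHomogeneous.C_mul hz r)
  refine ⟨_, _, _, hlin α β γ, hlin α (ω * β) (ω ^ 2 * γ), hlin α (ω ^ 2 * β) (ω * γ), ?_⟩
  have hCω : C ω ^ 2 + C ω + 1 = (0 : MvPolynomial (Fin 3) ℂ) := by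
    simpa using congrArg C hω
  calc hesseForm (α ^ 3) (β ^ 3) (γ ^ 3) (-(3 * α * β * γ)) x y z
      = (C α * x) ^ 3 + (C β * y) ^ 3 + (C γ * z) ^ 3 - 3 * (C α * x) * (C β * y) * (C γ * z) := by
        simp only [hesseForm, C_pow, C_neg, C_mul, map_ofNat C, neg_mul]
        ring
    _ = _ := by
        rw [sum_cubes_sub_three_mul_eq_mul hCω]
        simp only [map_mul, map_pow]
        ring

theorem completelyReducible_hesseForm_iff {N : Matrix (Fin 3) (Fin 3) ℂ} (hN : N.det ≠ 0)
    {a b c d : ℂ} :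
    CompletelyReducible (hesseForm a b c d (linearForm (N 0)) (linearForm (N 1)) (linearForm (N 2)))
      ↔ (a = 0 ∧ b = 0 ∧ c = 0) ∨ 27 * a * b * c + d ^ 3 = 0 := by
  refine ⟨fun hF => ?_, completelyReducible_hesseForm (isHomogeneous_linearForm _)
    (isHomogeneous_linearForm _) (isHomogeneous_linearForm _)⟩
  obtain ⟨κ, hκ⟩ := hF.exists_hessian_eq_C_mul
  rw [hessian_hesseForm N (pderiv_linearForm _) (pderiv_linearForm _) (pderiv_linearForm _)] at hκ
  refine hesse_coeffs_of_hessian_proportional (κ := κ) (pow_ne_zero 2 hN) two_ne_zero fun y => ?_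
  obtain ⟨x, hx⟩ := exists_eval_linearForm_eq hN.isUnit y
  simpa [hesseForm, hx] using congrArg (eval x) hκ

-- With `v`, `w` the first two linear forms, the factors of the `a`-term are `v + w`, `ω² v + ω w`,
-- `ω v + ω² w`, so it is `v³ + w³`; and `v³ - w³ = (v - w)(ω² v - ω w)(ω v - ω² w)` is
-- `(ω - ω²)³ = -3 (ω - ω²)` times the `b`-term.
theorem symmetricCubic_eq_hesseForm {ω : ℂ} (hω : ω ^ 2 + ω + 1 = 0) (a b c d : ℂ) :
    C a * ((2 * X 0 - X 1 - X 2) * (2 * X 1 - X 2 - X 0) * (2 * X 2 - X 0 - X 1)) +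
      C b * ((X 0 - X 1) * (X 1 - X 2) * (X 2 - X 0)) +
      C c * (X 0 + X 1 + X 2) ^ 3 +
      C d * (X 0 ^ 3 + X 1 ^ 3 + X 2 ^ 3 - 3 * X 0 * X 1 * X 2) =
    hesseForm (a + (ω - ω ^ 2) / 9 * b) (a - (ω - ω ^ 2) / 9 * b) c d
      (linearForm ![1, ω, ω ^ 2]) (linearForm ![1, ω ^ 2, ω]) (linearForm ![1, 1, 1]) := by
  refine MvPolynomial.funext fun x => ?_
  simp only [hesseForm, linearForm, Fin.sum_univ_three, map_add, map_sub, map_mul, map_pow, eval_C,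
    eval_X, eval_ofNat, C_1, one_mul, Matrix.cons_val_zero, Matrix.cons_val_one, Matrix.cons_val]
  grind

theorem stmt19 (a b c d : ℂ)
    (f : MvPolynomial (Fin 3) ℂ)
    (hfdef : f =
      C a * ((2 * X 0 - X 1 - X 2) * (2 * X 1 - X 2 - X 0) * (2 * X 2 - X 0 - X 1)) +
      C b * ((X 0 - X 1) * (X 1 - X 2) * (X 2 - X 0)) +
      C c * (X 0 + X 1 + X 2) ^ 3 +
      C d * (X 0 ^ 3 + X 1 ^ 3 + X 2 ^ 3 - 3 * X 0 * X 1 * X 2)) :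
    CompletelyReducible f ↔
      (a = 0 ∧ b = 0 ∧ c = 0) ∨ (27 * a ^ 2 + b ^ 2) * c + d ^ 3 = 0 := by
  obtain ⟨ω, hω⟩ := exists_sq_add_self_add_one_eq_zero ℂ
  have hs : (ω - ω ^ 2) ^ 2 = -3 := by linear_combination (ω ^ 2 - 3 * ω + 3) * hω
  have hs0 : ω - ω ^ 2 ≠ 0 := fun h => by norm_num [h] at hs
  have hdet : (!![1, ω, ω ^ 2; 1, ω ^ 2, ω; 1, 1, 1] : Matrix (Fin 3) (Fin 3) ℂ).det =
      -3 * (ω - ω ^ 2) := by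
    simp only [Matrix.det_fin_three, Matrix.of_apply, Matrix.cons_val', Matrix.cons_val_zero,
      Matrix.cons_val_fin_one, Matrix.cons_val_one, Matrix.cons_val, one_mul, mul_one]
    linear_combination (ω - ω ^ 2) * hω
  have hN : (!![1, ω, ω ^ 2; 1, ω ^ 2, ω; 1, 1, 1] : Matrix (Fin 3) (Fin 3) ℂ).det ≠ 0 := by
    rw [hdet]
    exact mul_ne_zero (by norm_num) hs0
  rw [hfdef, symmetricCubic_eq_hesseForm hω]
  refine (completelyReducible_hesseForm_iff hN).trans (or_congr ⟨?_, ?_⟩ ?_)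
  · rintro ⟨hA, hB, hc⟩
    have hb : (ω - ω ^ 2) * b = 0 := by linear_combination 9 / 2 * (hA - hB)
    exact ⟨by linear_combination (hA + hB) / 2, (mul_eq_zero.mp hb).resolve_left hs0, hc⟩
  · rintro ⟨rfl, rfl, rfl⟩
    simp
  · constructor <;> intro h
    · linear_combination h + b ^ 2 * c / 3 * hs
    · linear_combination h - b ^ 2 * c / 3 * hs
end
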